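/- Let m ≥ 4 be even, let n be divisible by m/2 with m ≤ n/4, set N = 2n/m (so N ≥ 8), and let k be an integer with 2 ≤ k ≤ n/(2m) + 1. Let x_1, …, x_μ be μ ≥ 1 independent uniformly random bit strings in {0,1}^n. Then the probability that no x_i satisfies k ≤ |x_i^j|_1 ≤ N − k for every block j ∈ {1, …, m/2} is at most (1 − (2/3)^{m/2})^μ, which is at most exp(−μ·(2/3)^{m/2}). -/

import Mathlib

/-- Number of one-bits of a block `b ∈ {0,1}^N`. -/
def ones {N : ℕ} (b : Fin N → Bool) : ℕ :=
  (Finset.univ.filter fun i => b i = true).card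

/-- A search point in `{0,1}^n` with `n = (m/2) * N`, presented as `m/2` blocks of
length `N` each. -/
abbrev Point (M N : ℕ) := Fin M → Fin N → Bool

/-!
A block of length `N ≥ 8` violates `k ≤ |x^j|₁ ≤ N - k` with `k ≤ N/4 + 1` only if it, or its
complement, has at most `N/4` one-bits. The binomial tail `∑_{i ≤ N/4} C(N, i) ≤ 2^N / 6`
follows by induction from `N` to `N + 4` (four Pascal steps), starting from `N = 8, …, 11`, so
a block is good with probability at least `2/3`. The blocks of a search point and the `μ`
search points are independent, which gives the bound `(1 - (2/3)^(m/2))^μ`, and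
`1 - x ≤ exp (-x)` gives the exponential one.
-/

open Finset

def chooseSum (M c : ℕ) : ℕ := ∑ i ∈ range c, M.choose i

lemma chooseSum_succ_succ (M c : ℕ) :
    chooseSum (M + 1) (c + 1) = chooseSum M (c + 1) + chooseSum M c := by
  simp only [chooseSum, sum_range_succ', Nat.choose_succ_succ, Nat.choose_zero_right,
    sum_add_distrib]
  ring

lemma chooseSum_add_two (M c : ℕ) : chooseSum (M + 2) (c + 2) =
    chooseSum M (c + 2) + 2 * chooseSum M (c + 1) + chooseSum M c := by
  rw [chooseSum_succ_succ, chooseSum_succ_succ, chooseSum_succ_succ]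
  ring

lemma chooseSum_add_four (M c : ℕ) : chooseSum (M + 4) (c + 4) =
    chooseSum M (c + 4) + 4 * chooseSum M (c + 3) + 6 * chooseSum M (c + 2) +
      4 * chooseSum M (c + 1) + chooseSum M c := by
  have h := chooseSum_add_two (M + 2) (c + 2)
  have h2 := chooseSum_add_two M (c + 2)
  have h1 := chooseSum_add_two M (c + 1)
  have h0 := chooseSum_add_two M c
  simp only [add_assoc, Nat.reduceAdd] at h h2 h1 h0
  omega

lemma chooseSum_mono (M : ℕ) {c d : ℕ} (h : c ≤ d) : chooseSum M c ≤ chooseSum M d :=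
  sum_le_sum_of_subset (range_subset_range.2 h)

lemma choose_succ_le_mul_choose {M s r : ℕ} (h : M - s ≤ r * (s + 1)) :
    M.choose (s + 1) ≤ r * M.choose s := by
  refine Nat.le_of_mul_le_mul_right ?_ s.succ_pos
  calc M.choose (s + 1) * (s + 1) = M.choose s * (M - s) := Nat.choose_succ_right_eq M s
    _ ≤ M.choose s * (r * (s + 1)) := Nat.mul_le_mul_left _ h
    _ = r * M.choose s * (s + 1) := by ring

/-- Only the term `C(M, s+3)` does not fit under `16 · chooseSum M (s+3)` directly; it is absorbed
by `C(M, s+3) ≤ 3 C(M, s+2)`, which holds because `s + 2 = M/4`. -/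
lemma chooseSum_add_four_le (M : ℕ) (hM : 8 ≤ M) :
    chooseSum (M + 4) (M / 4 + 2) ≤ 16 * chooseSum M (M / 4 + 1) := by
  obtain ⟨s, hs⟩ : ∃ s, M / 4 = s + 2 := ⟨M / 4 - 2, by omega⟩
  rw [hs]
  change chooseSum (M + 4) (s + 4) ≤ 16 * chooseSum M (s + 3)
  rw [chooseSum_add_four M s]
  have h4 : chooseSum M (s + 4) = chooseSum M (s + 3) + M.choose (s + 3) := sum_range_succ _ _
  have h3 : chooseSum M (s + 3) = chooseSum M (s + 2) + M.choose (s + 2) := sum_range_succ _ _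
  have h1 := chooseSum_mono M (show s + 1 ≤ s + 2 by omega)
  have h0 := chooseSum_mono M (show s ≤ s + 2 by omega)
  have hc : M.choose (s + 3) ≤ 3 * M.choose (s + 2) := choose_succ_le_mul_choose (by omega)
  omega

lemma six_mul_chooseSum_le_two_pow (N : ℕ) (hN : 8 ≤ N) :
    6 * chooseSum N (N / 4 + 1) ≤ 2 ^ N := by
  induction N using Nat.strong_induction_on with
  | _ N ih =>
    by_cases h12 : N < 12
    · interval_cases N <;> decide
    obtain ⟨M, rfl⟩ : ∃ M, N = M + 4 := ⟨N - 4, by omega⟩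
    rw [show (M + 4) / 4 + 1 = M / 4 + 2 by omega, pow_add]
    have := chooseSum_add_four_le M (by omega)
    have := ih M (by omega) (by omega)
    omega

lemma card_filter_ones_eq (N i : ℕ) : #{b : Fin N → Bool | ones b = i} = N.choose i := by
  trans #(powersetCard i (univ : Finset (Fin N)))
  · rw [← univ_filter_card_eq]
    refine card_nbij' (fun b => ({j | b j = true} : Finset (Fin N))) (fun s j => decide (j ∈ s))
      ?_ ?_ ?_ ?_ <;> intro _ <;> simp only [coe_filter, mem_univ, true_and, Set.mem_ofPred_eq] <;>
      simp [ones]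
  · simp

lemma card_filter_ones_lt (N c : ℕ) : #{b : Fin N → Bool | ones b < c} = chooseSum N c := by
  rw [card_eq_sum_card_fiberwise (f := ones) (t := range c) (fun b hb => by simpa using hb)]
  refine sum_congr rfl fun i hi => ?_
  rw [← card_filter_ones_eq N i, filter_filter]
  exact congrArg card <| filter_congr fun b _ => and_iff_right_of_imp fun h => h ▸ mem_range.1 hi

lemma ones_le {N : ℕ} (b : Fin N → Bool) : ones b ≤ N := by
  simpa [ones] using card_filter_le univ fun i => b i = true

lemma ones_not {N : ℕ} (b : Fin N → Bool) : ones (fun j => !b j) = N - ones b := by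
  simp only [ones, Bool.not_eq_true', ← Bool.not_eq_true, filter_not, card_univ_sdiff,
    Fintype.card_fin]

lemma card_filter_sub_lt_ones_le (N k : ℕ) :
    #{b : Fin N → Bool | N - k < ones b} ≤ #{b : Fin N → Bool | ones b < k} := by
  refine card_le_card_of_injOn (fun b j => !b j) (fun b hb => ?_) ?_
  · simp only [coe_filter, Set.mem_ofPred_eq, mem_univ, true_and] at hb ⊢
    have := ones_le b
    rw [ones_not]
    omega
  · intro b₁ _ b₂ _ h
    funext j
    simpa using congrFun h j

lemma card_filter_not_balanced_le (N k : ℕ) :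
    #{b : Fin N → Bool | ¬(k ≤ ones b ∧ ones b ≤ N - k)} ≤ 2 * chooseSum N k := by
  have hsub : ({b : Fin N → Bool | ¬(k ≤ ones b ∧ ones b ≤ N - k)} : Finset _)
      ⊆ ({b | ones b < k} : Finset (Fin N → Bool)) ∪ ({b | N - k < ones b} : Finset _) := by
    intro b
    simp only [mem_filter, mem_univ, true_and, mem_union]
    omega
  have := card_le_card hsub
  have := card_union_le ({b : Fin N → Bool | ones b < k} : Finset _) {b | N - k < ones b}
  have := card_filter_sub_lt_ones_le N k
  have := card_filter_ones_lt N k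
  omega

section Independence

variable {ι α : Type*} [Fintype ι] [DecidableEq ι] [Fintype α]
  (p : α → Prop) [DecidablePred p]

lemma card_filter_forall_pi_div [DecidablePred fun f : ι → α => ∀ i, p (f i)] :
    (#{f : ι → α | ∀ i, p (f i)} : ℝ) / Fintype.card (ι → α) =
      ((#{a | p a} : ℝ) / Fintype.card α) ^ Fintype.card ι := by
  have : ({f : ι → α | ∀ i, p (f i)} : Finset _) = Fintype.piFinset fun _ => {a | p a} := by
    ext f
    simp [Fintype.mem_piFinset]
  rw [this, Fintype.card_piFinset, Fintype.card_pi, div_pow]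
  simp

lemma card_filter_div_card_le_one : (#{a | p a} : ℝ) / Fintype.card α ≤ 1 :=
  div_le_one_of_le₀ (by exact_mod_cast card_le_univ _) (Nat.cast_nonneg _)

lemma card_filter_not_div [Nonempty α] :
    (#{a | ¬p a} : ℝ) / Fintype.card α = 1 - (#{a | p a} : ℝ) / Fintype.card α := by
  rw [eq_sub_iff_add_eq', ← add_div, ← Nat.cast_add, card_filter_add_card_filter_not, card_univ,
    div_self (by positivity)]

end Independence

lemma three_mul_card_filter_not_balanced_le {N k : ℕ} (hN : 8 ≤ N) (hk : k ≤ N / 4 + 1) :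
    3 * #{b : Fin N → Bool | ¬(k ≤ ones b ∧ ones b ≤ N - k)} ≤ 2 ^ N := by
  have := card_filter_not_balanced_le N k
  have := chooseSum_mono N hk
  have := six_mul_chooseSum_le_two_pow N hN
  omega

lemma two_thirds_le_card_filter_balanced_div {N k : ℕ} (hN : 8 ≤ N) (hk : k ≤ N / 4 + 1) :
    (2 / 3 : ℝ) ≤ #{b : Fin N → Bool | k ≤ ones b ∧ ones b ≤ N - k} /
      Fintype.card (Fin N → Bool) := by
  have hbad : (#{b : Fin N → Bool | ¬(k ≤ ones b ∧ ones b ≤ N - k)} : ℝ) /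
      Fintype.card (Fin N → Bool) ≤ 1 / 3 := by
    have : (3 * #{b : Fin N → Bool | ¬(k ≤ ones b ∧ ones b ≤ N - k)} : ℝ) ≤
        Fintype.card (Fin N → Bool) := by
      simpa using (Nat.cast_le (α := ℝ)).2 (three_mul_card_filter_not_balanced_le hN hk)
    rw [div_le_iff₀ (by positivity)]
    linarith
  rw [card_filter_not_div] at hbad
  linarith

lemma one_sub_pow_le_exp_neg_mul {x : ℝ} (hx : x ≤ 1) (μ : ℕ) :
    (1 - x) ^ μ ≤ Real.exp (-μ * x) := by
  calc (1 - x) ^ μ ≤ Real.exp (-x) ^ μ :=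
        pow_le_pow_left₀ (by linarith) (Real.one_sub_le_exp_neg x) μ
    _ = Real.exp (-μ * x) := by rw [← Real.exp_nat_mul]; ring_nf

theorem init_failure_prob_general (m n N k μ : ℕ) (hm : 4 ≤ m)
    (hmn : m ≤ n / 4) (hN : N = 2 * n / m)
    (hk : k ≤ n / (2 * m) + 1) :
    ((Finset.univ.filter fun xs : Fin μ → Point (m / 2) N =>
        ∀ i, ¬ ∀ j, k ≤ ones (xs i j) ∧ ones (xs i j) ≤ N - k).card : ℝ) /
        (Fintype.card (Fin μ → Point (m / 2) N) : ℝ)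
      ≤ (1 - (2 / 3 : ℝ) ^ (m / 2)) ^ μ ∧
    (1 - (2 / 3 : ℝ) ^ (m / 2)) ^ μ ≤ Real.exp (-(μ : ℝ) * (2 / 3 : ℝ) ^ (m / 2)) := by
  have hN8 : 8 ≤ N := by
    rw [hN, Nat.le_div_iff_mul_le (by omega)]
    have := (Nat.le_div_iff_mul_le (by norm_num)).1 hmn
    omega
  have hkN : k ≤ N / 4 + 1 := by
    rwa [hN, Nat.div_div_eq_div_mul, show m * 4 = 2 * (2 * m) by ring,
      Nat.mul_div_mul_left _ _ two_pos]
  have hblock := two_thirds_le_card_filter_balanced_div hN8 hkN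
  have hpow_le_one : (2 / 3 : ℝ) ^ (m / 2) ≤ 1 := pow_le_one₀ (by norm_num) (by norm_num)
  refine ⟨?_, one_sub_pow_le_exp_neg_mul hpow_le_one μ⟩
  rw [card_filter_forall_pi_div
      fun x : Point (m / 2) N => ¬∀ j, k ≤ ones (x j) ∧ ones (x j) ≤ N - k,
    card_filter_not_div,
    card_filter_forall_pi_div fun b : Fin N → Bool => k ≤ ones b ∧ ones b ≤ N - k,
    Fintype.card_fin, Fintype.card_fin]
  have hfrac_le_one :=
    card_filter_div_card_le_one fun b : Fin N → Bool => k ≤ ones b ∧ ones b ≤ N - k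
  gcongr
  exact sub_nonneg.2 (pow_le_one₀ (by positivity) hfrac_le_one)

/-- with `m ≥ 4` even, `m/2 ∣ n`, `m ≤ n/4`, `N = 2n/m` and
`2 ≤ k ≤ n/(2m) + 1`, the probability that none of `μ ≥ 1` independent uniformly random
search points `x ∈ {0,1}^n` satisfies `k ≤ |x^j|₁ ≤ N − k` in every block `j` is at most
`(1 − (2/3)^(m/2))^μ ≤ exp(−μ·(2/3)^(m/2))`. -/
theorem init_failure_prob (m n N k μ : ℕ) (hm : 4 ≤ m) (hme : m % 2 = 0)
    (hn : 0 < n) (hdvd : m / 2 ∣ n) (hmn : m ≤ n / 4) (hN : N = 2 * n / m)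
    (hk2 : 2 ≤ k) (hk : k ≤ n / (2 * m) + 1) (hμ : 1 ≤ μ) :
    ((Finset.univ.filter fun xs : Fin μ → Point (m / 2) N =>
        ∀ i, ¬ ∀ j, k ≤ ones (xs i j) ∧ ones (xs i j) ≤ N - k).card : ℝ) /
        (Fintype.card (Fin μ → Point (m / 2) N) : ℝ)
      ≤ (1 - (2 / 3 : ℝ) ^ (m / 2)) ^ μ ∧
    (1 - (2 / 3 : ℝ) ^ (m / 2)) ^ μ ≤ Real.exp (-(μ : ℝ) * (2 / 3 : ℝ) ^ (m / 2)) :=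
  init_failure_prob_general m n N k μ hm hmn hN hk
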